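/- Fix i₀ ∈ I and λ₀ ∈ Λ with p := p_{λ₀ i₀} ≠ 𝐨 and set e = δ_{(i₀, p⁻¹, λ₀)} ∈ A, an idempotent. Suppose A is biprojective: there exists a ℂ-linear A-bimodule map ρ : A → A ⊗[ℂ] A (i.e. a·ρ(x) = ρ(a*x) and ρ(x)·a = ρ(x*a) for all a, x ∈ A, with actions a·(u⊗v) = (a*u)⊗v and (u⊗v)·a = u⊗(v*a)) such that Π ∘ ρ = id_A. Then the corner algebra eAe admits a separability idempotent: there exists Δ ∈ A ⊗[ℂ] A lying in the image of (eAe) ⊗[ℂ] (eAe) (i.e. Δ is a sum of elementary tensors of the form (e*a*e) ⊗ (e*b*e)) such that Π(Δ) = e and x·Δ = Δ·x for every x of the form x = e*a*e with a ∈ A. -/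

import Mathlib

/-!
Write `p = p_{λ₀ i₀}` and `y g = δ_{(i₀, g p⁻¹, λ₀)}`, so that `y g * y h = y (g h)`, `e = y 1`
and `eAe` is spanned by the `y g`. Left multiplication by `y g` is left multiplication by `e`
followed by left translation by `g` of the `G`-coordinate, and likewise on the right. Hence for
`M = ρ e ≠ 0` the bimodule identities `y g · M = ρ (y g) = M · y g` make the coefficients of `M`
invariant under a free action of `G` on pairs of indices; as `M` has finite support, `G` is finite.
For finite `G` the average `|G|⁻¹ ∑ y g ⊗ y g⁻¹` is the separability idempotent of
`eAe ≅ ℂ[G]`.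
-/

open scoped Classical

/-- The product of two nonzero elements of the Rees semigroup `S(G; I, Λ; P)`,
taking values in `S = WithZero (I × G × Λ)`: the result is
`(i, g * p_{λ j} * h, μ)` if the sandwich entry `p_{λ j}` is nonzero, and `∅ = 0`
otherwise. -/
noncomputable def reesMulAux {G I Λ : Type*} [Group G] (P : Λ → I → WithZero G)
    (s t : I × G × Λ) : WithZero (I × G × Λ) :=
  if h : P s.2.2 t.1 = 0 then 0
  else (((s.1, s.2.1 * WithZero.unzero h * t.2.1, t.2.2) : I × G × Λ) :
    WithZero (I × G × Λ))

/-- The Rees multiplication on `S = (I × G × Λ) ∪ {∅} = WithZero (I × G × Λ)`,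
where the adjoined zero `∅ = 0` is absorbing. -/
noncomputable def reesMul {G I Λ : Type*} [Group G] (P : Λ → I → WithZero G)
    (x y : WithZero (I × G × Λ)) : WithZero (I × G × Λ) :=
  if hx : x = 0 then 0
  else if hy : y = 0 then 0
  else reesMulAux P (WithZero.unzero hx) (WithZero.unzero hy)

/-- The product `δ_s * δ_t` of two basis vectors of the contracted semigroup algebra
`A = ℂ₀[S]`: it is `δ_{s·t}` if `s·t ≠ ∅` in `S`, and `0` if `s·t = ∅`. -/
noncomputable def reesDelta {G I Λ : Type*} [Group G] (P : Λ → I → WithZero G)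
    (s t : I × G × Λ) : (I × G × Λ) →₀ ℂ :=
  if h : P s.2.2 t.1 = 0 then 0
  else Finsupp.single (s.1, s.2.1 * WithZero.unzero h * t.2.1, t.2.2) (1 : ℂ)

/-- The multiplication of the contracted semigroup algebra `A = ℂ₀[S]`, as the
(unique) bilinear map determined on basis vectors by `δ_s * δ_t = δ_{s·t}` if
`s·t ≠ ∅` in `S` and `δ_s * δ_t = 0` if `s·t = ∅`. -/
noncomputable def reesAlgMul {G I Λ : Type*} [Group G] (P : Λ → I → WithZero G) :
    ((I × G × Λ) →₀ ℂ) →ₗ[ℂ] ((I × G × Λ) →₀ ℂ) →ₗ[ℂ] ((I × G × Λ) →₀ ℂ) :=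
  Finsupp.lift (((I × G × Λ) →₀ ℂ) →ₗ[ℂ] ((I × G × Λ) →₀ ℂ)) ℂ (I × G × Λ)
    fun s => Finsupp.lift ((I × G × Λ) →₀ ℂ) ℂ (I × G × Λ) fun t => reesDelta P s t

open TensorProduct


section TensorCoeff

variable {R α β α' β' : Type*} [CommSemiring R]

theorem finsuppTensorFinsupp'_map_domLCongr (σ : α ≃ α') (τ : β ≃ β')
    (z : (α →₀ R) ⊗[R] (β →₀ R)) :
    finsuppTensorFinsupp' R α' β' (map (Finsupp.domLCongr (M := R) (R := R) σ).toLinearMap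
        (Finsupp.domLCongr (M := R) (R := R) τ).toLinearMap z) =
      Finsupp.domLCongr (R := R) (σ.prodCongr τ) (finsuppTensorFinsupp' R α β z) := by
  induction z using TensorProduct.induction_on with
  | zero => simp
  | tmul f g =>
    ext ⟨a, b⟩
    simp [finsuppTensorFinsupp'_apply_apply, Finsupp.equivMapDomain_apply]
  | add x y hx hy => simp only [map_add, hx, hy]

/-- The coefficients of `z` are invariant under `(a, b) ↦ (σ i a, (τ i)⁻¹ b)`, so its nonempty
finite support contains a free orbit of `ι`. -/
theorem finite_of_map_domLCongr_eq {ι : Type*} (z : (α →₀ R) ⊗[R] (β →₀ R)) (hz : z ≠ 0)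
    (σ : ι → α ≃ α) (τ : ι → β ≃ β) (hσ : ∀ a, Function.Injective fun i => σ i a)
    (h : ∀ i, map (Finsupp.domLCongr (σ i)).toLinearMap LinearMap.id z =
      map LinearMap.id (Finsupp.domLCongr (τ i)).toLinearMap z) :
    Finite ι := by
  set F := finsuppTensorFinsupp' R α β z
  have hidα : (LinearMap.id : (α →₀ R) →ₗ[R] _) =
      (Finsupp.domLCongr (Equiv.refl α)).toLinearMap := by
    rw [Finsupp.domLCongr_refl, LinearEquiv.refl_toLinearMap]
  have hidβ : (LinearMap.id : (β →₀ R) →ₗ[R] _) =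
      (Finsupp.domLCongr (Equiv.refl β)).toLinearMap := by
    rw [Finsupp.domLCongr_refl, LinearEquiv.refl_toLinearMap]
  have hF : ∀ i a b, F (σ i a, (τ i).symm b) = F (a, b) := by
    intro i a b
    have := congrArg (fun w => finsuppTensorFinsupp' R α β w (σ i a, b)) (h i)
    rw [hidα, hidβ, finsuppTensorFinsupp'_map_domLCongr,
      finsuppTensorFinsupp'_map_domLCongr] at this
    simpa [Finsupp.equivMapDomain_apply, F] using this.symm
  obtain ⟨⟨a, b⟩, hab⟩ : F.support.Nonempty := by
    simpa [Finsupp.support_nonempty_iff, F] using hz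
  refine Finite.of_injective (β := F.support) (fun i => ⟨(σ i a, (τ i).symm b), ?_⟩) ?_
  · rwa [Finsupp.mem_support_iff, hF, ← Finsupp.mem_support_iff]
  · intro i j hij
    exact hσ a (congrArg (fun q : F.support => q.1.1) hij)

end TensorCoeff

section AveragedDiagonal

variable (K : Type*) {A G : Type*} [Field K] [AddCommGroup A] [Module K A] [Group G] [Fintype G]

/-- For `y g = g` in the group algebra `K[G]` this is its standard separability idempotent. -/
noncomputable def averagedDiagonal (y : G → A) : A ⊗[K] A :=
  (Fintype.card G : K)⁻¹ • ∑ g, y g ⊗ₜ[K] y g⁻¹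

variable {K} (mul : A →ₗ[K] A →ₗ[K] A) {y : G → A}

theorem lift_averagedDiagonal [CharZero K] (hy : ∀ g h, mul (y g) (y h) = y (g * h)) :
    lift mul (averagedDiagonal K y) = y 1 := by
  simp only [averagedDiagonal, map_smul, map_sum, lift.tmul, hy, mul_inv_cancel,
    Finset.sum_const, Finset.card_univ, ← Nat.cast_smul_eq_nsmul K, smul_smul]
  rw [inv_mul_cancel₀ (Nat.cast_ne_zero.mpr Fintype.card_ne_zero), one_smul]

theorem mul_averagedDiagonal_comm (hy : ∀ g h, mul (y g) (y h) = y (g * h)) (h : G) :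
    map (mul (y h)) LinearMap.id (averagedDiagonal K y) =
      map LinearMap.id (mul.flip (y h)) (averagedDiagonal K y) := by
  simp only [averagedDiagonal, map_smul, map_sum, map_tmul, LinearMap.id_apply,
    LinearMap.flip_apply, hy]
  congr 1
  exact Fintype.sum_equiv (Equiv.mulLeft h) _ _ fun g => by simp [mul_assoc]

theorem mul_averagedDiagonal_comm_of_mem_span (hy : ∀ g h, mul (y g) (y h) = y (g * h))
    {x : A} (hx : x ∈ Submodule.span K (Set.range y)) :
    map (mul x) LinearMap.id (averagedDiagonal K y) =
      map LinearMap.id (mul.flip x) (averagedDiagonal K y) := by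
  induction hx using Submodule.span_induction with
  | mem x hx =>
    obtain ⟨h, rfl⟩ := hx
    exact mul_averagedDiagonal_comm mul hy h
  | zero => simp
  | add x x' _ _ ihx ihx' =>
    simp only [map_add, TensorProduct.map_add_left, TensorProduct.map_add_right,
      LinearMap.add_apply, ihx, ihx']
  | smul c x _ ihx =>
    simp only [map_smul, TensorProduct.map_smul_left, TensorProduct.map_smul_right,
      LinearMap.smul_apply, ihx]

theorem averagedDiagonal_mem_span_corner (hy : ∀ g h, mul (y g) (y h) = y (g * h)) :
    averagedDiagonal K y ∈ Submodule.span K {z : A ⊗[K] A | ∃ a b : A,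
      z = mul (mul (y 1) a) (y 1) ⊗ₜ[K] mul (mul (y 1) b) (y 1)} := by
  refine Submodule.smul_mem _ _ (Submodule.sum_mem _ fun g _ => Submodule.subset_span ?_)
  exact ⟨y g, y g⁻¹, by simp only [hy, one_mul, mul_one]⟩

end AveragedDiagonal

section Rees

variable {G I Λ : Type*} [Group G] (P : Λ → I → WithZero G)

theorem reesAlgMul_single_single (s t : I × G × Λ) (a b : ℂ) :
    reesAlgMul P (Finsupp.single s a) (Finsupp.single t b) = (a * b) • reesDelta P s t := by
  simp [reesAlgMul, Finsupp.lift_apply, Finsupp.sum_single_index, mul_smul]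

def leftTranslate (c : G) : I × G × Λ ≃ I × G × Λ :=
  (Equiv.refl I).prodCongr ((Equiv.mulLeft c).prodCongr (Equiv.refl Λ))

def rightTranslate (c : G) : I × G × Λ ≃ I × G × Λ :=
  (Equiv.refl I).prodCongr ((Equiv.mulRight c).prodCongr (Equiv.refl Λ))

@[simp]
theorem leftTranslate_apply (c : G) (s : I × G × Λ) :
    leftTranslate c s = (s.1, c * s.2.1, s.2.2) := rfl

@[simp]
theorem rightTranslate_apply (c : G) (s : I × G × Λ) :
    rightTranslate c s = (s.1, s.2.1 * c, s.2.2) := rfl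

theorem reesAlgMul_leftTranslate (c : G) (x y : (I × G × Λ) →₀ ℂ) :
    reesAlgMul P (Finsupp.domLCongr (M := ℂ) (R := ℂ) (leftTranslate c) x) y =
      Finsupp.domLCongr (M := ℂ) (R := ℂ) (leftTranslate c) (reesAlgMul P x y) := by
  induction x using Finsupp.induction_linear with
  | zero => simp
  | add x x' hx hx' => simp only [map_add, LinearMap.add_apply, hx, hx']
  | single s a =>
    induction y using Finsupp.induction_linear with
    | zero => simp
    | add y y' hy hy' => simp only [map_add, hy, hy']
    | single t b =>
      simp only [Finsupp.domLCongr_single, reesAlgMul_single_single, map_smul,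
        leftTranslate_apply, reesDelta]
      split_ifs <;> simp [mul_assoc]

theorem reesAlgMul_rightTranslate (c : G) (x y : (I × G × Λ) →₀ ℂ) :
    reesAlgMul P x (Finsupp.domLCongr (M := ℂ) (R := ℂ) (rightTranslate c) y) =
      Finsupp.domLCongr (M := ℂ) (R := ℂ) (rightTranslate c) (reesAlgMul P x y) := by
  induction x using Finsupp.induction_linear with
  | zero => simp
  | add x x' hx hx' => simp only [map_add, LinearMap.add_apply, hx, hx']
  | single s a =>
    induction y using Finsupp.induction_linear with
    | zero => simp
    | add y y' hy hy' => simp only [map_add, hy, hy']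
    | single t b =>
      simp only [Finsupp.domLCongr_single, reesAlgMul_single_single, map_smul,
        rightTranslate_apply, reesDelta]
      split_ifs <;> simp [mul_assoc]

variable {P} {i₀ : I} {lam₀ : Λ} (hp : P lam₀ i₀ ≠ 0)

noncomputable def reesCornerBasis (g : G) : (I × G × Λ) →₀ ℂ :=
  Finsupp.single (i₀, g * (WithZero.unzero hp)⁻¹, lam₀) 1

theorem reesCornerBasis_one :
    reesCornerBasis hp 1 = Finsupp.single (i₀, (WithZero.unzero hp)⁻¹, lam₀) 1 := by
  rw [reesCornerBasis, one_mul]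

theorem reesAlgMul_reesCornerBasis (g h : G) :
    reesAlgMul P (reesCornerBasis hp g) (reesCornerBasis hp h) = reesCornerBasis hp (g * h) := by
  simp only [reesCornerBasis, reesAlgMul_single_single, reesDelta, dif_neg hp, one_mul, one_smul]
  congr 2
  group

theorem reesAlgMul_reesCornerBasis_eq_comp (g : G) :
    reesAlgMul P (reesCornerBasis hp g) =
      (Finsupp.domLCongr (leftTranslate g)).toLinearMap ∘ₗ reesAlgMul P (reesCornerBasis hp 1) := by
  have hg : reesCornerBasis hp g =
      Finsupp.domLCongr (M := ℂ) (R := ℂ) (leftTranslate g) (reesCornerBasis hp 1) := by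
    simp [reesCornerBasis]
  refine LinearMap.ext fun x => ?_
  rw [hg, reesAlgMul_leftTranslate]
  rfl

theorem flip_reesAlgMul_reesCornerBasis_eq_comp (g : G) :
    (reesAlgMul P).flip (reesCornerBasis hp g) =
      (Finsupp.domLCongr (rightTranslate (MulAut.conj (WithZero.unzero hp) g))).toLinearMap
        ∘ₗ (reesAlgMul P).flip (reesCornerBasis hp 1) := by
  have hg : reesCornerBasis hp g = Finsupp.domLCongr (M := ℂ) (R := ℂ)
      (rightTranslate (MulAut.conj (WithZero.unzero hp) g)) (reesCornerBasis hp 1) := by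
    simp [reesCornerBasis, mul_assoc]
  refine LinearMap.ext fun x => ?_
  rw [LinearMap.flip_apply, hg, reesAlgMul_rightTranslate]
  rfl

theorem reesCorner_mem_span (a : (I × G × Λ) →₀ ℂ) :
    reesAlgMul P (reesAlgMul P (reesCornerBasis hp 1) a) (reesCornerBasis hp 1) ∈
      Submodule.span ℂ (Set.range (reesCornerBasis hp)) := by
  induction a using Finsupp.induction_linear with
  | zero => simp
  | add a a' ha ha' => simpa only [map_add, LinearMap.add_apply] using Submodule.add_mem _ ha ha'
  | single s c =>
    obtain ⟨i, g, l⟩ := s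
    rw [reesCornerBasis_one]
    by_cases h₁ : P lam₀ i = 0
    · simp [reesAlgMul_single_single, reesDelta, h₁]
    by_cases h₂ : P l i₀ = 0
    · simp [reesAlgMul_single_single, reesDelta, h₁, h₂]
    simp only [reesAlgMul_single_single, reesDelta, dif_neg h₁, dif_neg h₂, one_mul, mul_one,
      Finsupp.smul_single, smul_eq_mul]
    rw [← Finsupp.smul_single_one]
    exact Submodule.smul_mem _ _ (Submodule.subset_span ⟨_, rfl⟩)

end Rees

theorem finite_of_reesAlgMul_biprojective {G I Λ : Type*} [Group G] {P : Λ → I → WithZero G}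
    {i₀ : I} {lam₀ : Λ} (hp : P lam₀ i₀ ≠ 0)
    (ρ : ((I × G × Λ) →₀ ℂ) →ₗ[ℂ] (((I × G × Λ) →₀ ℂ) ⊗[ℂ] ((I × G × Λ) →₀ ℂ)))
    (hsplit : ∀ x : (I × G × Λ) →₀ ℂ, TensorProduct.lift (reesAlgMul P) (ρ x) = x)
    (hleft : ∀ a x : (I × G × Λ) →₀ ℂ,
      TensorProduct.map (reesAlgMul P a) LinearMap.id (ρ x) = ρ (reesAlgMul P a x))
    (hright : ∀ a x : (I × G × Λ) →₀ ℂ,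
      TensorProduct.map LinearMap.id ((reesAlgMul P).flip a) (ρ x) = ρ (reesAlgMul P x a)) :
    Finite G := by
  set p := WithZero.unzero hp
  set M := ρ (reesCornerBasis hp 1) with hM
  have hM_ne : M ≠ 0 := fun h => by
    have := hsplit (reesCornerBasis hp 1)
    rw [← hM, h, map_zero, reesCornerBasis] at this
    exact one_ne_zero (Finsupp.single_eq_zero.mp this.symm)
  have he : reesAlgMul P (reesCornerBasis hp 1) (reesCornerBasis hp 1) = reesCornerBasis hp 1 := by
    rw [reesAlgMul_reesCornerBasis, one_mul]
  refine finite_of_map_domLCongr_eq M hM_ne leftTranslate (fun g => rightTranslate (MulAut.conj p g))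
    (fun s g g' hgg' => mul_right_cancel (congrArg (fun t => t.2.1) hgg')) fun g => ?_
  have hL : map (Finsupp.domLCongr (leftTranslate g)).toLinearMap LinearMap.id M =
      ρ (reesCornerBasis hp g) :=
    calc map (Finsupp.domLCongr (leftTranslate g)).toLinearMap LinearMap.id M
        = map (Finsupp.domLCongr (leftTranslate g)).toLinearMap LinearMap.id
            (map (reesAlgMul P (reesCornerBasis hp 1)) LinearMap.id M) := by rw [hM, hleft, he]
      _ = map (reesAlgMul P (reesCornerBasis hp g)) LinearMap.id M := by
        rw [map_map, LinearMap.id_comp, reesAlgMul_reesCornerBasis_eq_comp hp g]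
      _ = ρ (reesCornerBasis hp g) := by rw [hM, hleft, reesAlgMul_reesCornerBasis, mul_one]
  have hR : map LinearMap.id (Finsupp.domLCongr (rightTranslate (MulAut.conj p g))).toLinearMap M =
      ρ (reesCornerBasis hp g) :=
    calc map LinearMap.id (Finsupp.domLCongr (rightTranslate (MulAut.conj p g))).toLinearMap M
        = map LinearMap.id (Finsupp.domLCongr (rightTranslate (MulAut.conj p g))).toLinearMap
            (map LinearMap.id ((reesAlgMul P).flip (reesCornerBasis hp 1)) M) := by
          rw [hM, hright, he]
      _ = map LinearMap.id ((reesAlgMul P).flip (reesCornerBasis hp g)) M := by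
        rw [map_map, LinearMap.id_comp, flip_reesAlgMul_reesCornerBasis_eq_comp hp g]
      _ = ρ (reesCornerBasis hp g) := by rw [hM, hright, reesAlgMul_reesCornerBasis, one_mul]
  rw [hL, hR]

theorem rees_corner_separability_idempotent_of_biprojective_general
    {G I Λ : Type*} [Group G]
    (P : Λ → I → WithZero G)
    (i₀ : I) (lam₀ : Λ) (hp : P lam₀ i₀ ≠ 0)
    (ρ : ((I × G × Λ) →₀ ℂ) →ₗ[ℂ] (((I × G × Λ) →₀ ℂ) ⊗[ℂ] ((I × G × Λ) →₀ ℂ)))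
    (hsplit : ∀ x : (I × G × Λ) →₀ ℂ, TensorProduct.lift (reesAlgMul P) (ρ x) = x)
    (hleft : ∀ a x : (I × G × Λ) →₀ ℂ,
      TensorProduct.map (reesAlgMul P a) LinearMap.id (ρ x) = ρ (reesAlgMul P a x))
    (hright : ∀ a x : (I × G × Λ) →₀ ℂ,
      TensorProduct.map LinearMap.id ((reesAlgMul P).flip a) (ρ x) = ρ (reesAlgMul P x a)) :
    (reesAlgMul P (Finsupp.single ((i₀, (WithZero.unzero hp)⁻¹, lam₀) : I × G × Λ) (1 : ℂ))
        (Finsupp.single ((i₀, (WithZero.unzero hp)⁻¹, lam₀) : I × G × Λ) (1 : ℂ))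
      = Finsupp.single ((i₀, (WithZero.unzero hp)⁻¹, lam₀) : I × G × Λ) (1 : ℂ)) ∧
    ∃ Δ : ((I × G × Λ) →₀ ℂ) ⊗[ℂ] ((I × G × Λ) →₀ ℂ),
      Δ ∈ Submodule.span ℂ
        {z : ((I × G × Λ) →₀ ℂ) ⊗[ℂ] ((I × G × Λ) →₀ ℂ) |
          ∃ a b : (I × G × Λ) →₀ ℂ,
            z = (reesAlgMul P (reesAlgMul P
                  (Finsupp.single ((i₀, (WithZero.unzero hp)⁻¹, lam₀) : I × G × Λ) (1 : ℂ)) a)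
                  (Finsupp.single ((i₀, (WithZero.unzero hp)⁻¹, lam₀) : I × G × Λ) (1 : ℂ)))
                ⊗ₜ[ℂ] (reesAlgMul P (reesAlgMul P
                  (Finsupp.single ((i₀, (WithZero.unzero hp)⁻¹, lam₀) : I × G × Λ) (1 : ℂ)) b)
                  (Finsupp.single ((i₀, (WithZero.unzero hp)⁻¹, lam₀) : I × G × Λ) (1 : ℂ)))} ∧
      TensorProduct.lift (reesAlgMul P) Δ
        = Finsupp.single ((i₀, (WithZero.unzero hp)⁻¹, lam₀) : I × G × Λ) (1 : ℂ) ∧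
      ∀ a : (I × G × Λ) →₀ ℂ,
        TensorProduct.map
            (reesAlgMul P (reesAlgMul P (reesAlgMul P
              (Finsupp.single ((i₀, (WithZero.unzero hp)⁻¹, lam₀) : I × G × Λ) (1 : ℂ)) a)
              (Finsupp.single ((i₀, (WithZero.unzero hp)⁻¹, lam₀) : I × G × Λ) (1 : ℂ))))
            LinearMap.id Δ
          = TensorProduct.map LinearMap.id
              ((reesAlgMul P).flip (reesAlgMul P (reesAlgMul P
                (Finsupp.single ((i₀, (WithZero.unzero hp)⁻¹, lam₀) : I × G × Λ) (1 : ℂ)) a)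
                (Finsupp.single ((i₀, (WithZero.unzero hp)⁻¹, lam₀) : I × G × Λ) (1 : ℂ)))) Δ := by
  have hy := reesAlgMul_reesCornerBasis hp
  have : Finite G := finite_of_reesAlgMul_biprojective hp ρ hsplit hleft hright
  let _ : Fintype G := Fintype.ofFinite G
  rw [← reesCornerBasis_one hp]
  exact ⟨by rw [hy, one_mul], averagedDiagonal ℂ (reesCornerBasis hp),
    averagedDiagonal_mem_span_corner _ hy, lift_averagedDiagonal _ hy,
    fun a => mul_averagedDiagonal_comm_of_mem_span _ hy (reesCorner_mem_span hp a)⟩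

/-- fix `i₀, λ₀` with `p := p_{λ₀ i₀} ≠ 𝐨` and let
`e = δ_{(i₀, p⁻¹, λ₀)} ∈ A = ℂ₀[S]`. If `A` is biprojective, i.e. the multiplication
`Π : A ⊗[ℂ] A → A` has a right inverse `ρ` which is an `A`-bimodule map, then `e` is
idempotent and the corner algebra `eAe` has a separability idempotent: some
`Δ ∈ (eAe) ⊗[ℂ] (eAe) ⊆ A ⊗[ℂ] A` with `Π(Δ) = e` and `x·Δ = Δ·x` for every
`x = e*a*e`. -/
theorem rees_corner_separability_idempotent_of_biprojective
    {G I Λ : Type*} [Group G] [Nonempty I] [Nonempty Λ]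
    (P : Λ → I → WithZero G)
    (hrow : ∀ lam : Λ, ∃ i : I, P lam i ≠ 0)
    (hcol : ∀ i : I, ∃ lam : Λ, P lam i ≠ 0)
    (i₀ : I) (lam₀ : Λ) (hp : P lam₀ i₀ ≠ 0)
    (ρ : ((I × G × Λ) →₀ ℂ) →ₗ[ℂ] (((I × G × Λ) →₀ ℂ) ⊗[ℂ] ((I × G × Λ) →₀ ℂ)))
    (hsplit : ∀ x : (I × G × Λ) →₀ ℂ, TensorProduct.lift (reesAlgMul P) (ρ x) = x)
    (hleft : ∀ a x : (I × G × Λ) →₀ ℂ,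
      TensorProduct.map (reesAlgMul P a) LinearMap.id (ρ x) = ρ (reesAlgMul P a x))
    (hright : ∀ a x : (I × G × Λ) →₀ ℂ,
      TensorProduct.map LinearMap.id ((reesAlgMul P).flip a) (ρ x) = ρ (reesAlgMul P x a)) :
    (reesAlgMul P (Finsupp.single ((i₀, (WithZero.unzero hp)⁻¹, lam₀) : I × G × Λ) (1 : ℂ))
        (Finsupp.single ((i₀, (WithZero.unzero hp)⁻¹, lam₀) : I × G × Λ) (1 : ℂ))
      = Finsupp.single ((i₀, (WithZero.unzero hp)⁻¹, lam₀) : I × G × Λ) (1 : ℂ)) ∧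
    ∃ Δ : ((I × G × Λ) →₀ ℂ) ⊗[ℂ] ((I × G × Λ) →₀ ℂ),
      Δ ∈ Submodule.span ℂ
        {z : ((I × G × Λ) →₀ ℂ) ⊗[ℂ] ((I × G × Λ) →₀ ℂ) |
          ∃ a b : (I × G × Λ) →₀ ℂ,
            z = (reesAlgMul P (reesAlgMul P
                  (Finsupp.single ((i₀, (WithZero.unzero hp)⁻¹, lam₀) : I × G × Λ) (1 : ℂ)) a)
                  (Finsupp.single ((i₀, (WithZero.unzero hp)⁻¹, lam₀) : I × G × Λ) (1 : ℂ)))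
                ⊗ₜ[ℂ] (reesAlgMul P (reesAlgMul P
                  (Finsupp.single ((i₀, (WithZero.unzero hp)⁻¹, lam₀) : I × G × Λ) (1 : ℂ)) b)
                  (Finsupp.single ((i₀, (WithZero.unzero hp)⁻¹, lam₀) : I × G × Λ) (1 : ℂ)))} ∧
      TensorProduct.lift (reesAlgMul P) Δ
        = Finsupp.single ((i₀, (WithZero.unzero hp)⁻¹, lam₀) : I × G × Λ) (1 : ℂ) ∧
      ∀ a : (I × G × Λ) →₀ ℂ,
        TensorProduct.map
            (reesAlgMul P (reesAlgMul P (reesAlgMul P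
              (Finsupp.single ((i₀, (WithZero.unzero hp)⁻¹, lam₀) : I × G × Λ) (1 : ℂ)) a)
              (Finsupp.single ((i₀, (WithZero.unzero hp)⁻¹, lam₀) : I × G × Λ) (1 : ℂ))))
            LinearMap.id Δ
          = TensorProduct.map LinearMap.id
              ((reesAlgMul P).flip (reesAlgMul P (reesAlgMul P
                (Finsupp.single ((i₀, (WithZero.unzero hp)⁻¹, lam₀) : I × G × Λ) (1 : ℂ)) a)
                (Finsupp.single ((i₀, (WithZero.unzero hp)⁻¹, lam₀) : I × G × Λ) (1 : ℂ)))) Δ :=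
  rees_corner_separability_idempotent_of_biprojective_general P i₀ lam₀ hp ρ hsplit hleft hright
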